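/- Let k, d ≥ 1. Let v₁, v₂ ∈ ℂᵏ be orthonormal, let W be a k×k complex unitary matrix with W·v₁ = v₂ and W·v₂ = v₁, and let σ₁, σ₂ be d×d density matrices. Define ρ = ½·(v₁v₁ᴴ ⊗ σ₁) + ½·(v₂v₂ᴴ ⊗ σ₂), where ⊗ is the Kronecker product and v·vᴴ the rank-one matrix with entries v(x)·conj(v(y)). Then ‖ρ − (W ⊗ I)·ρ·(W ⊗ I)ᴴ‖₁ = ‖σ₁ − σ₂‖₁. -/

import Mathlib

open Matrix
open scoped ComplexOrder Classical Kronecker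

/-- The positive semidefinite square root of a matrix (junk value `0` when the
matrix is not positive semidefinite). -/
noncomputable def msqrt {m : Type*} [Fintype m] [DecidableEq m]
    (M : Matrix m m ℂ) : Matrix m m ℂ :=
  if h : M.PosSemidef then (h.1.eigenvectorUnitary : Matrix m m ℂ) *
    diagonal ((↑) ∘ Real.sqrt ∘ h.1.eigenvalues) * (star h.1.eigenvectorUnitary : Matrix m m ℂ)
  else 0

/-- The trace norm `‖M‖₁ = Tr √(Mᴴ M)`. -/
noncomputable def traceNorm {m : Type*} [Fintype m] [DecidableEq m]
    (M : Matrix m m ℂ) : ℝ :=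
  ((msqrt (Mᴴ * M)).trace).re

/-!
Conjugation by `W ⊗ 1` swaps the two labels `P₁ = v₁v₁ᴴ` and `P₂ = v₂v₂ᴴ`, so the difference
factors as `(½ (P₁ - P₂)) ⊗ (σ₁ - σ₂)`. The trace norm is multiplicative on Kronecker products,
because `√(AᴴA) ⊗ √(BᴴB)` is the positive square root of `(A ⊗ B)ᴴ(A ⊗ B)`, and for orthonormal
`v₁, v₂` the positive square root of `(P₁ - P₂)ᴴ(P₁ - P₂) = P₁ + P₂` is the projection `P₁ + P₂`
itself, of trace `2`.
-/

namespace Matrix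

section Algebra

variable {m n R : Type*} [CommRing R]

theorem smul_kronecker_add_sub_swap (c : R) (A B : Matrix m m R) (X Y : Matrix n n R) :
    (c • (A ⊗ₖ X) + c • (B ⊗ₖ Y)) - (c • (B ⊗ₖ X) + c • (A ⊗ₖ Y)) = (c • (A - B)) ⊗ₖ (X - Y) := by
  ext ⟨i, j⟩ ⟨i', j'⟩
  simp only [sub_apply, add_apply, smul_apply, kroneckerMap_apply, smul_eq_mul]
  ring

variable [StarRing R] [Fintype m]

theorem mul_vecMulVec_star_mul_conjTranspose (W : Matrix n m R) (v : m → R) :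
    W * vecMulVec v (star v) * Wᴴ = vecMulVec (W *ᵥ v) (star (W *ᵥ v)) := by
  rw [mul_vecMulVec, vecMulVec_mul, vecMul_conjTranspose, star_star]

theorem kronecker_one_mul_mul_conjTranspose [Fintype n] [DecidableEq n]
    (W A : Matrix m m R) (B : Matrix n n R) :
    (W ⊗ₖ (1 : Matrix n n R)) * (A ⊗ₖ B) * (W ⊗ₖ (1 : Matrix n n R))ᴴ = (W * A * Wᴴ) ⊗ₖ B := by
  rw [conjTranspose_kronecker, conjTranspose_one, ← mul_kronecker_mul, ← mul_kronecker_mul,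
    Matrix.one_mul, Matrix.mul_one]

end Algebra

variable {m n : Type*} [Fintype m] [DecidableEq m] [Fintype n] [DecidableEq n]

section msqrt

open scoped MatrixOrder

theorem msqrt_eq_cfcSqrt {M : Matrix m m ℂ} (hM : M.PosSemidef) : msqrt M = CFC.sqrt M := by
  rw [msqrt, dif_pos hM, CFC.sqrt_eq_cfc, cfc_nnreal_eq_real _ M, hM.1.cfc_eq]
  simp only [IsHermitian.cfc, Unitary.conjStarAlgAut_apply, Real.coe_sqrt, Real.coe_toNNReal']
  congr 3
  funext i
  simp [hM.eigenvalues_nonneg i]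

theorem PosSemidef.posSemidef_msqrt {M : Matrix m m ℂ} (hM : M.PosSemidef) :
    (msqrt M).PosSemidef := by
  rw [msqrt_eq_cfcSqrt hM, ← nonneg_iff_posSemidef]
  exact CFC.sqrt_nonneg M

theorem PosSemidef.msqrt_mul_msqrt {M : Matrix m m ℂ} (hM : M.PosSemidef) :
    msqrt M * msqrt M = M := by
  rw [msqrt_eq_cfcSqrt hM]
  exact CFC.sqrt_mul_sqrt_self M hM.nonneg

theorem PosSemidef.msqrt_mul_self {R : Matrix m m ℂ} (hR : R.PosSemidef) :
    msqrt (R * R) = R := by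
  have hRR : (R * R).PosSemidef := by
    simpa only [hR.1.eq] using posSemidef_conjTranspose_mul_self R
  rw [msqrt_eq_cfcSqrt hRR]
  exact CFC.sqrt_mul_self R hR.nonneg

end msqrt

theorem traceNorm_eq_re_trace {M R : Matrix m m ℂ} (hR : R.PosSemidef) (hRM : R * R = Mᴴ * M) :
    traceNorm M = R.trace.re := by
  rw [traceNorm, ← hRM, hR.msqrt_mul_self]

theorem traceNorm_smul (c : ℂ) (M : Matrix m m ℂ) : traceNorm (c • M) = ‖c‖ * traceNorm M := by
  have hM := posSemidef_conjTranspose_mul_self M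
  rw [traceNorm_eq_re_trace (R := ‖c‖ • msqrt (Mᴴ * M)) (hM.posSemidef_msqrt.smul (norm_nonneg c)),
    trace_smul, traceNorm, Complex.real_smul, Complex.re_ofReal_mul]
  rw [smul_mul_smul_comm, hM.msqrt_mul_msqrt, conjTranspose_smul, smul_mul_smul_comm,
    ← sq, Complex.star_def, Complex.conj_mul', ← Complex.coe_smul, Complex.ofReal_pow]

theorem traceNorm_kronecker (A : Matrix m m ℂ) (B : Matrix n n ℂ) :
    traceNorm (A ⊗ₖ B) = traceNorm A * traceNorm B := by
  have hA := posSemidef_conjTranspose_mul_self A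
  have hB := posSemidef_conjTranspose_mul_self B
  rw [traceNorm_eq_re_trace (hA.posSemidef_msqrt.kronecker hB.posSemidef_msqrt), trace_kronecker,
    traceNorm, traceNorm, Complex.mul_re, ← (Complex.nonneg_iff.1 hA.posSemidef_msqrt.trace_nonneg).2,
    zero_mul, sub_zero]
  rw [← mul_kronecker_mul, hA.msqrt_mul_msqrt, hB.msqrt_mul_msqrt, conjTranspose_kronecker,
    ← mul_kronecker_mul]

theorem traceNorm_vecMulVec_sub_vecMulVec {u v : m → ℂ} (hu : star u ⬝ᵥ u = 1)
    (hv : star v ⬝ᵥ v = 1) (huv : star u ⬝ᵥ v = 0) :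
    traceNorm (vecMulVec u (star u) - vecMulVec v (star v)) = 2 := by
  have hvu : star v ⬝ᵥ u = 0 := by rw [star_dotProduct, huv, star_zero]
  have hmul (a b : m → ℂ) : vecMulVec a (star a) * vecMulVec b (star b) =
      (star a ⬝ᵥ b) • vecMulVec a (star b) := by
    rw [vecMulVec_mul_vecMulVec, vecMulVec_smul]
  have hR := (posSemidef_vecMulVec_self_star u).add (posSemidef_vecMulVec_self_star v)
  rw [traceNorm_eq_re_trace hR]
  · rw [trace_add, trace_vecMulVec, trace_vecMulVec, dotProduct_comm u, dotProduct_comm v, hu, hv]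
    norm_num
  · simp only [conjTranspose_sub, conjTranspose_vecMulVec, star_star, add_mul, mul_add, sub_mul,
      mul_sub, hmul, hu, hv, huv, hvu, one_smul, zero_smul]
    abel

end Matrix

theorem label_register_trace_distance_general
    {k d : ℕ}
    (v₁ v₂ : Fin k → ℂ)
    (hv₁ : ∑ x, (starRingEnd ℂ) (v₁ x) * v₁ x = 1)
    (hv₂ : ∑ x, (starRingEnd ℂ) (v₂ x) * v₂ x = 1)
    (horth : ∑ x, (starRingEnd ℂ) (v₁ x) * v₂ x = 0)
    (W : Matrix (Fin k) (Fin k) ℂ)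
    (hWv₁ : W.mulVec v₁ = v₂) (hWv₂ : W.mulVec v₂ = v₁)
    (σ₁ σ₂ : Matrix (Fin d) (Fin d) ℂ) :
    traceNorm
      ((((1 : ℂ) / 2) • ((Matrix.of fun x y => v₁ x * (starRingEnd ℂ) (v₁ y)) ⊗ₖ σ₁) +
        ((1 : ℂ) / 2) • ((Matrix.of fun x y => v₂ x * (starRingEnd ℂ) (v₂ y)) ⊗ₖ σ₂)) -
       (W ⊗ₖ (1 : Matrix (Fin d) (Fin d) ℂ)) *
        (((1 : ℂ) / 2) • ((Matrix.of fun x y => v₁ x * (starRingEnd ℂ) (v₁ y)) ⊗ₖ σ₁) +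
          ((1 : ℂ) / 2) • ((Matrix.of fun x y => v₂ x * (starRingEnd ℂ) (v₂ y)) ⊗ₖ σ₂)) *
        (W ⊗ₖ (1 : Matrix (Fin d) (Fin d) ℂ))ᴴ)
      = traceNorm (σ₁ - σ₂) := by
  have hP (v : Fin k → ℂ) : (Matrix.of fun x y => v x * (starRingEnd ℂ) (v y)) =
      vecMulVec v (star v) := rfl
  rw [hP, hP, Matrix.mul_add, Matrix.add_mul, Matrix.mul_smul, Matrix.smul_mul, Matrix.mul_smul,
    Matrix.smul_mul, kronecker_one_mul_mul_conjTranspose, kronecker_one_mul_mul_conjTranspose,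
    mul_vecMulVec_star_mul_conjTranspose, mul_vecMulVec_star_mul_conjTranspose, hWv₁, hWv₂,
    smul_kronecker_add_sub_swap, traceNorm_kronecker, traceNorm_smul,
    traceNorm_vecMulVec_sub_vecMulVec hv₁ hv₂ horth]
  norm_num

/-- the label-register construction preserves trace distance:
`‖ρ − (W ⊗ I) ρ (W ⊗ I)ᴴ‖₁ = ‖σ₁ − σ₂‖₁`. -/
theorem label_register_trace_distance
    {k d : ℕ} (hk : 1 ≤ k) (hd : 1 ≤ d)
    (v₁ v₂ : Fin k → ℂ)
    (hv₁ : ∑ x, (starRingEnd ℂ) (v₁ x) * v₁ x = 1)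
    (hv₂ : ∑ x, (starRingEnd ℂ) (v₂ x) * v₂ x = 1)
    (horth : ∑ x, (starRingEnd ℂ) (v₁ x) * v₂ x = 0)
    (W : Matrix (Fin k) (Fin k) ℂ) (hW : W ∈ Matrix.unitaryGroup (Fin k) ℂ)
    (hWv₁ : W.mulVec v₁ = v₂) (hWv₂ : W.mulVec v₂ = v₁)
    (σ₁ σ₂ : Matrix (Fin d) (Fin d) ℂ)
    (hσ₁ : σ₁.PosSemidef) (hσ₁tr : σ₁.trace = 1)
    (hσ₂ : σ₂.PosSemidef) (hσ₂tr : σ₂.trace = 1) :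
    traceNorm
      ((((1 : ℂ) / 2) • ((Matrix.of fun x y => v₁ x * (starRingEnd ℂ) (v₁ y)) ⊗ₖ σ₁) +
        ((1 : ℂ) / 2) • ((Matrix.of fun x y => v₂ x * (starRingEnd ℂ) (v₂ y)) ⊗ₖ σ₂)) -
       (W ⊗ₖ (1 : Matrix (Fin d) (Fin d) ℂ)) *
        (((1 : ℂ) / 2) • ((Matrix.of fun x y => v₁ x * (starRingEnd ℂ) (v₁ y)) ⊗ₖ σ₁) +
          ((1 : ℂ) / 2) • ((Matrix.of fun x y => v₂ x * (starRingEnd ℂ) (v₂ y)) ⊗ₖ σ₂)) *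
        (W ⊗ₖ (1 : Matrix (Fin d) (Fin d) ℂ))ᴴ)
      = traceNorm (σ₁ - σ₂) :=
  label_register_trace_distance_general v₁ v₂ hv₁ hv₂ horth W hWv₁ hWv₂ σ₁ σ₂
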